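/- Let G be a profinite group with trivial virtual center VZ(G) = {1}. Suppose that G contains a nontrivial closed normal subgroup R that is nilpotent (as an abstract group) and contains every nilpotent normal subgroup of G (i.e., the Fitting subgroup of G is nilpotent and nontrivial). Then G has no compactly generated, topologically simple envelope: there is no Hausdorff topological group L that is topologically simple and compactly generated, together with an injective continuous group homomorphism η : G → L whose range is open in L. -/

import Mathlib

/-!
Let `A` be the centre of `R`: a nontrivial, abelian, closed normal subgroup of `G`. Identify `G`
with the compact open subgroup `η G` of `L`. For `c ∈ L`, the abelian subgroup `η⁻¹ (c⁻¹ A c)` is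
normalised by an open subgroup of `G`, so by Fitting's theorem its intersection with some open
normal subgroup lies in `R`; hence `A ∩ V_c ⊆ c R c⁻¹` for an open subgroup `V_c`. The conjugates
of `A` generate a dense normal subgroup of `L`, so compact generation makes `L` generated by `G`
and finitely many conjugates `c A c⁻¹`, `c ∈ E`. For an open normal `W ≤ ⋂_{c ∈ E} V_c`, the
closed subgroup `A ∩ W` is normalised by `G` and centralised by every `c A c⁻¹` (which centralises
`c R c⁻¹`), so it is normal in `L`. Simplicity gives `A ∩ W = 1` or `A ∩ W = G = L`, and in both
cases the virtual centre of `G` is nontrivial.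
-/

open Subgroup Pointwise

section Group

variable {Γ : Type*} [Group Γ]

theorem commutator_le_iff_le_comap_centralizer {A B Z : Subgroup Γ} [Z.Normal] :
    ⁅A, B⁆ ≤ Z ↔
      A ≤ (centralizer (B.map (QuotientGroup.mk' Z) : Set (Γ ⧸ Z))).comap
        (QuotientGroup.mk' Z) := by
  rw [← map_le_iff_le_comap, ← commutator_eq_bot_iff_le_centralizer, ← map_commutator,
    Subgroup.map_eq_bot_iff, QuotientGroup.ker_mk']

theorem iSup_commutator_le_iff {ι : Sort*} {A : ι → Subgroup Γ} {B Z : Subgroup Γ} [Z.Normal] :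
    ⁅⨆ i, A i, B⁆ ≤ Z ↔ ∀ i, ⁅A i, B⁆ ≤ Z := by
  simp only [commutator_le_iff_le_comap_centralizer, iSup_le_iff]

theorem commutator_iSup_le_iff {ι : Sort*} {A : Subgroup Γ} {B : ι → Subgroup Γ} {Z : Subgroup Γ}
    [Z.Normal] : ⁅A, ⨆ i, B i⁆ ≤ Z ↔ ∀ i, ⁅A, B i⁆ ≤ Z := by
  simp only [commutator_comm A, iSup_commutator_le_iff]

theorem isNilpotent_iSup_of_le_centralizer {ι : Type*} [Finite ι] (K : ι → Subgroup Γ)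
    [hKn : ∀ i, (K i).Normal] (hK : ∀ i, K i ≤ centralizer (K i)) :
    Group.IsNilpotent ↥(⨆ i, K i) := by
  classical
  cases nonempty_fintype ι
  -- `M j` is generated by the intersections of `j` of the `K i`; a commutator with some `K t`
  -- is trivial if `t` is among them and lies in an intersection of `j + 1` of them otherwise.
  let M : ℕ → Subgroup Γ := fun j => ⨆ s : {s : Finset ι // s.card = j}, ⨅ i ∈ s.1, K i
  have hnormal : ∀ s : Finset ι, (⨅ i ∈ s, K i).Normal := fun s =>
    normal_iInf_normal fun i => normal_iInf_normal fun _ => hKn i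
  have hMnormal : ∀ j, (M j).Normal := fun j =>
    have := fun s : {s : Finset ι // s.card = j} => hnormal s.1
    iSup_normal _
  have hM1 : (⨆ i, K i) ≤ M 1 := iSup_le fun i =>
    le_iSup_of_le (⟨{i}, Finset.card_singleton i⟩ : {s : Finset ι // s.card = 1}) (by simp)
  have hstep : ∀ j, ⁅M j, ⨆ i, K i⁆ ≤ M (j + 1) := by
    intro j
    rw [iSup_commutator_le_iff]
    rintro ⟨s, rfl⟩
    rw [commutator_iSup_le_iff]
    dsimp only
    intro t
    by_cases ht : t ∈ s
    · rw [commutator_eq_bot_iff_le_centralizer.mpr ((iInf₂_le t ht).trans (hK t))]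
      exact bot_le
    · have := hnormal s
      refine (commutator_le_inf _ _).trans
        (le_iSup_of_le ⟨insert t s, Finset.card_insert_of_notMem ht⟩ ?_)
      rw [Finset.iInf_insert, inf_comm]
  have hlcs : ∀ n, (⨆ i, K i).lowerCentralSeries n ≤ M (n + 1) := by
    intro n
    induction n with
    | zero => exact hM1
    | succ n ih => exact (commutator_mono ih le_rfl).trans (hstep (n + 1))
  have hbot : M (Fintype.card ι + 1) = ⊥ := by
    have : IsEmpty {s : Finset ι // s.card = Fintype.card ι + 1} :=
      ⟨fun s => by have := Finset.card_le_univ s.1; omega⟩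
    exact iSup_of_empty _
  exact isNilpotent_of_lowerCentralSeries_eq_bot (le_bot_iff.mp (hbot ▸ hlcs _))

theorem smul_le_centralizer_smul {α : Type*} [Group α] [MulDistribMulAction α Γ] (a : α)
    {S T : Subgroup Γ} (h : S ≤ centralizer T) : a • S ≤ centralizer (a • T : Subgroup Γ) := by
  intro x hx
  obtain ⟨x, hxS, rfl⟩ := (mem_smul_pointwise_iff_exists _ _ _).mp hx
  refine mem_centralizer_iff.mpr fun y hy => ?_
  obtain ⟨y, hyT, rfl⟩ := (mem_smul_pointwise_iff_exists _ _ _).mp hy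
  rw [← smul_mul', ← smul_mul', mem_centralizer_iff.mp (h hxS) y hyT]

theorem smul_le_normalizer_smul {α : Type*} [Group α] [MulDistribMulAction α Γ] (a : α)
    {S T : Subgroup Γ} (h : S ≤ normalizer T) : a • S ≤ normalizer (a • T : Subgroup Γ) := by
  refine le_normalizer_iff.mpr fun x hx y hy => ?_
  obtain ⟨x, hxS, rfl⟩ := (mem_smul_pointwise_iff_exists _ _ _).mp hx
  obtain ⟨y, hyT, rfl⟩ := (mem_smul_pointwise_iff_exists _ _ _).mp hy
  rw [← smul_inv', ← smul_mul', ← smul_mul']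
  exact smul_mem_pointwise_smul _ _ _ (le_normalizer_iff.mp h x hxS y hyT)

theorem map_le_centralizer_map {Γ' : Type*} [Group Γ'] {S T : Subgroup Γ} (h : S ≤ centralizer T)
    (f : Γ →* Γ') : S.map f ≤ centralizer (T.map f : Subgroup Γ') :=
  (map_mono h).trans (map_centralizer_le_centralizer_image _ f)

theorem normalClosure_le_iSup_conjAct_smul (S : Subgroup Γ) :
    normalClosure (S : Set Γ) ≤ ⨆ g : Γ, ConjAct.toConjAct g • S := by
  refine closure_le _ |>.mpr fun x hx => ?_
  obtain ⟨s, hs, hsx⟩ := Group.mem_conjugatesOfSet_iff.mp hx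
  obtain ⟨g, rfl⟩ := isConj_iff.mp hsx
  exact le_iSup (fun g : Γ => ConjAct.toConjAct g • S) g (smul_mem_pointwise_smul s _ S hs)

theorem isNilpotent_of_le {S T : Subgroup Γ} (h : S ≤ T) [Group.IsNilpotent T] :
    Group.IsNilpotent S := by
  obtain ⟨n, hn⟩ := (isNilpotent_iff_lowerCentralSeries T).mp ‹_›
  exact isNilpotent_of_lowerCentralSeries_eq_bot
    (le_bot_iff.mp ((lowerCentralSeries_mono n h).trans hn.le))

theorem le_of_le_centralizer_of_le_normalizer {R T H : Subgroup Γ}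
    (hRmax : ∀ S : Subgroup Γ, S.Normal → Group.IsNilpotent S → S ≤ R) [H.Normal] [H.FiniteIndex]
    (hT : T ≤ centralizer T) (hTH : T ≤ H) (hHT : H ≤ normalizer T) : T ≤ R := by
  -- The conjugates of `T` are abelian normal subgroups of `H`, one for each coset of `H`.
  let f : Γ ⧸ H → Subgroup Γ := fun q => ConjAct.toConjAct q.out • T
  have hf : ∀ g : Γ, ConjAct.toConjAct g • T = f g := fun g => by
    obtain ⟨h, hh⟩ := QuotientGroup.mk_out_eq_mul H g
    simp only [f, hh, ConjAct.toConjAct_mul, mul_smul, conjAct_pointwise_smul_eq_self (hHT h.2)]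
  have hfH : ∀ q, f q ≤ H := fun q =>
    (pointwise_smul_le_pointwise_smul_iff.mpr hTH).trans (‹H.Normal›.conjAct _).le
  let K : Γ ⧸ H → Subgroup H := fun q => (f q).subgroupOf H
  have hKn : ∀ q, (K q).Normal := fun q =>
    (normal_subgroupOf_iff_le_normalizer (hfH q)).mpr
      ((‹H.Normal›.conjAct _).ge.trans (smul_le_normalizer_smul _ hHT))
  have hKc : ∀ q, K q ≤ centralizer (K q) := fun q x hx =>
    mem_centralizer_iff.mpr fun y hy => Subtype.ext <|
      mem_centralizer_iff.mp (smul_le_centralizer_smul _ hT (mem_subgroupOf.mp hx)) _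
        (mem_subgroupOf.mp hy)
  have hKmap : (⨆ q, K q).map H.subtype = ⨆ q, f q := by
    simp only [K, Subgroup.map_iSup, subgroupOf_map_subtype, inf_eq_left.mpr (hfH _)]
  have : Group.IsNilpotent ↥(⨆ q, f q) := by
    have := isNilpotent_iSup_of_le_centralizer K hKc
    exact hKmap ▸ Group.nilpotent_of_surjective _ (H.subtype.subgroupMap_surjective (⨆ q, K q))
  have hN : normalClosure (T : Set Γ) ≤ ⨆ q, f q :=
    (normalClosure_le_iSup_conjAct_smul T).trans <| iSup_le fun g => hf g ▸ le_iSup f _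
  exact subset_normalClosure.trans (hRmax _ normalClosure_normal (isNilpotent_of_le hN))

theorem inf_centralizer_ne_bot {R : Subgroup Γ} (hR : R ≠ ⊥) [Group.IsNilpotent R] :
    R ⊓ centralizer R ≠ ⊥ := by
  have := (nontrivial_iff_ne_bot R).mpr hR
  refine ne_bot_of_le_ne_bot ((map_eq_bot_iff_of_injective _ R.subtype_injective).not.mpr
    (Group.IsNilpotent.center_ne_bot R)) ?_
  rintro _ ⟨z, hz, rfl⟩
  exact ⟨z.2, mem_centralizer_iff.mpr fun r hr =>
    congrArg Subtype.val (mem_center_iff.mp hz ⟨r, hr⟩)⟩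

theorem normal_map_of_le_conjAct_smul {G L : Type*} [Group G] [Group L] {η : G →* L}
    {A B R : Subgroup G} [B.Normal] (hAR : A ≤ centralizer R) {E : Finset L}
    (hE : η.range ⊔ ⨆ c ∈ E, ConjAct.toConjAct c • A.map η = ⊤)
    (hB : ∀ c ∈ E, B.map η ≤ ConjAct.toConjAct c • R.map η) : (B.map η).Normal := by
  rw [← normalizer_eq_top_iff, eq_top_iff, ← hE]
  refine sup_le ?_ (iSup₂_le fun c hc => ?_)
  · rw [MonoidHom.range_eq_map, ← normalizer_eq_top (H := B)]
    exact le_normalizer_map η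
  · calc ConjAct.toConjAct c • A.map η
        ≤ centralizer (ConjAct.toConjAct c • R.map η : Subgroup L) :=
          smul_le_centralizer_smul _ (map_le_centralizer_map hAR η)
      _ ≤ centralizer (B.map η) := centralizer_le (hB c hc)
      _ ≤ normalizer (B.map η) := centralizer_le_normalizer _

end Group

section VirtualCenter

variable {G : Type*} [Group G] [TopologicalSpace G] [IsTopologicalGroup G]

theorem eq_bot_of_isOpen_of_le_centralizer
    (hVZ : ∀ g : G, IsOpen (centralizer {g} : Set G) → g = 1) {S : Subgroup G}
    (hS : IsOpen (S : Set G)) (hSc : S ≤ centralizer S) : S = ⊥ :=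
  eq_bot_iff.mpr fun s hs => mem_bot.mpr <| hVZ s <|
    isOpen_mono (hSc.trans (centralizer_le (Set.singleton_subset_iff.mpr hs))) hS

theorem eq_bot_of_inf_eq_bot_of_isOpen
    (hVZ : ∀ g : G, IsOpen (centralizer {g} : Set G) → g = 1) {A W : Subgroup G} [A.Normal]
    [W.Normal] (hW : IsOpen (W : Set G)) (h : A ⊓ W = ⊥) : A = ⊥ :=
  eq_bot_iff.mpr fun a ha => mem_bot.mpr <| hVZ a <| isOpen_mono (fun w hw =>
    mem_centralizer_singleton_iff.mpr
      (commute_of_normal_of_disjoint A W ‹_› ‹_› (disjoint_iff.mpr h) a w ha hw).symm.eq) hW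

end VirtualCenter

section Compact

variable {G : Type*} [Group G] [TopologicalSpace G] [IsTopologicalGroup G] [CompactSpace G]

theorem exists_openNormalSubgroup_le (V : OpenSubgroup G) :
    ∃ H : OpenNormalSubgroup G, (H : Subgroup G) ≤ V :=
  IsTopologicalGroup.exist_openNormalSubgroup_sub_clopen_nhds_of_one V.isClopen V.one_mem

theorem exists_openNormalSubgroup_inf_le {R T : Subgroup G}
    (hRmax : ∀ S : Subgroup G, S.Normal → Group.IsNilpotent S → S ≤ R)
    (hT : T ≤ centralizer T) (V : OpenSubgroup G) (hVT : (V : Subgroup G) ≤ normalizer T) :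
    ∃ H : OpenNormalSubgroup G, T ⊓ H ≤ R := by
  obtain ⟨H, hHV⟩ := exists_openNormalSubgroup_le V
  have : (H : Subgroup G).FiniteIndex := H.finiteIndex_of_finite_quotient
  refine ⟨H, le_of_le_centralizer_of_le_normalizer hRmax ?_ inf_le_right ?_⟩
  · exact inf_le_left.trans (hT.trans (centralizer_le inf_le_left))
  · exact (le_inf (hHV.trans hVT) le_normalizer).trans inf_normalizer_le_normalizer_inf

variable {L : Type*} [Group L] [TopologicalSpace L] [IsTopologicalGroup L]

theorem exists_openSubgroup_map_inf_le_conjAct_smul {η : G →* L} (hη : Continuous η)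
    (hηinj : Function.Injective η) (hηopen : IsOpenMap η) {R A : Subgroup G}
    (hRmax : ∀ S : Subgroup G, S.Normal → Group.IsNilpotent S → S ≤ R) [A.Normal]
    (hA : A ≤ centralizer A) (c : L) :
    ∃ V : OpenSubgroup G, (A ⊓ V).map η ≤ ConjAct.toConjAct c • R.map η := by
  set a := ConjAct.toConjAct c
  let T := (a⁻¹ • A.map η).comap η
  have hT : T ≤ centralizer T := fun x hx => mem_centralizer_iff.mpr fun y hy => hηinj <| by
    simpa using mem_centralizer_iff.mp
      (smul_le_centralizer_smul a⁻¹ (map_le_centralizer_map hA η) hx) _ hy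
  have hUT : (a⁻¹ • η.range).comap η ≤ normalizer T := by
    refine (comap_mono (smul_le_normalizer_smul a⁻¹ ?_)).trans (le_normalizer_comap η)
    rw [MonoidHom.range_eq_map, ← normalizer_eq_top (H := A)]
    exact le_normalizer_map η
  have hUopen : IsOpen ((a⁻¹ • η.range).comap η : Set G) := by
    rw [coe_comap, coe_pointwise_smul, MonoidHom.coe_range]
    exact (hηopen.isOpen_range.smul a⁻¹).preimage hη
  obtain ⟨H, hH⟩ := exists_openNormalSubgroup_inf_le hRmax hT ⟨_, hUopen⟩ hUT
  have hVopen : IsOpen ((a • (H : Subgroup G).map η).comap η : Set G) := by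
    rw [coe_comap, coe_pointwise_smul, coe_map]
    exact ((hηopen _ H.isOpen).smul a).preimage hη
  refine ⟨⟨_, hVopen⟩, ?_⟩
  rintro _ ⟨x, ⟨hxA, hxV⟩, rfl⟩
  obtain ⟨_, ⟨h, hhH, rfl⟩, hhx⟩ := (mem_smul_pointwise_iff_exists _ _ _).mp hxV
  have hhT : h ∈ T := by
    show η h ∈ a⁻¹ • A.map η
    rw [mem_inv_pointwise_smul_iff, hhx]
    exact mem_map_of_mem η hxA
  rw [← hhx]
  exact smul_mem_pointwise_smul _ _ _ (mem_map_of_mem η (hH ⟨hhT, hhH⟩))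

end Compact

section CompactlyGenerated

variable {L : Type*} [Group L] [TopologicalSpace L]

theorem exists_eq_top_of_directed {K : Set L} (hK : IsCompact K) (hKgen : Subgroup.closure K = ⊤)
    {ι : Type*} [Nonempty ι] {F : ι → Subgroup L} (hF : Directed (· ≤ ·) F)
    (hFopen : ∀ i, IsOpen (F i : Set L)) (hFtop : ⨆ i, F i = ⊤) : ∃ i, F i = ⊤ := by
  obtain ⟨i, hi⟩ := hK.elim_directed_cover (fun i => (F i : Set L)) hFopen
    (by rw [← coe_iSup_of_directed hF, hFtop, coe_top]; exact Set.subset_univ K) hF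
  exact ⟨i, eq_top_iff.mpr (hKgen ▸ (closure_le _).mpr hi)⟩

variable [IsTopologicalGroup L]

theorem sup_eq_top_of_isOpen {U D : Subgroup L} (hU : IsOpen (U : Set L))
    (hD : D.topologicalClosure = ⊤) : U ⊔ D = ⊤ :=
  eq_top_iff.mpr <| hD ▸ D.topologicalClosure_minimal le_sup_right
    (isClosed_of_isOpen _ (isOpen_mono le_sup_left hU))

theorem exists_finset_sup_iSup_conjAct_smul_eq_top
    (hsimple : ∀ M : Subgroup L, M.Normal → IsClosed (M : Set L) → M = ⊥ ∨ M = ⊤)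
    {K : Set L} (hK : IsCompact K) (hKgen : Subgroup.closure K = ⊤) {U P : Subgroup L}
    (hU : IsOpen (U : Set L)) (hP : P ≠ ⊥) :
    ∃ E : Finset L, U ⊔ ⨆ c ∈ E, ConjAct.toConjAct c • P = ⊤ := by
  have hD : (normalClosure (P : Set L)).topologicalClosure = ⊤ :=
    (hsimple _ (is_normal_topologicalClosure _) (isClosed_topologicalClosure _)).resolve_left
      fun h => hP (eq_bot_iff.mpr (h ▸ subset_normalClosure.trans (le_topologicalClosure _)))
  refine exists_eq_top_of_directed hK hKgen
    (Monotone.directed_le fun E E' hE =>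
      sup_le_sup_left (biSup_mono fun _ hc => Finset.mem_of_subset hE hc) U)
    (fun E => isOpen_mono le_sup_left hU) (eq_top_iff.mpr ?_)
  rw [← sup_eq_top_of_isOpen hU hD]
  refine sup_le (le_iSup_of_le ∅ le_sup_left) ((normalClosure_le_iSup_conjAct_smul P).trans ?_)
  exact iSup_le fun c => le_iSup_of_le {c} (le_sup_of_le_right (le_iSup₂_of_le c
    (Finset.mem_singleton_self c) le_rfl))

end CompactlyGenerated

theorem stmt_10_general {G : Type*} [Group G] [TopologicalSpace G] [IsTopologicalGroup G]
    [CompactSpace G] [T2Space G]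
    (hVZ : ∀ g : G, IsOpen ((Subgroup.centralizer {g} : Subgroup G) : Set G) → g = 1)
    (R : Subgroup G) (hRne : R ≠ ⊥) (hRnormal : R.Normal)
    (hRclosed : IsClosed (R : Set G)) (hRnilp : Group.IsNilpotent R)
    (hRmax : ∀ S : Subgroup G, S.Normal → Group.IsNilpotent S → S ≤ R) :
    ∀ (L : Type*) [Group L] [TopologicalSpace L] [IsTopologicalGroup L] [T2Space L]
      (η : G →* L), Continuous η → Function.Injective η → IsOpen (Set.range η) →
        Nontrivial L →
        (∀ M : Subgroup L, M.Normal → IsClosed (M : Set L) → M = ⊥ ∨ M = ⊤) →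
        ¬ ∃ K : Set L, IsCompact K ∧ Subgroup.closure K = ⊤ := by
  intro L _ _ _ _ η hη hηinj hηrange _ hsimple ⟨K, hK, hKgen⟩
  let A := R ⊓ centralizer R
  have hAR : A ≤ centralizer R := inf_le_right
  have hA : A ≤ centralizer A := hAR.trans (centralizer_le inf_le_left)
  have hAne : A ≠ ⊥ := inf_centralizer_ne_bot hRne
  have hηopen : IsOpenMap η :=
    (Topology.IsOpenEmbedding.mk (hη.isClosedEmbedding hηinj).isEmbedding hηrange).isOpenMap
  choose V hV using exists_openSubgroup_map_inf_le_conjAct_smul hη hηinj hηopen hRmax hA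
  obtain ⟨E, hE⟩ := exists_finset_sup_iSup_conjAct_smul_eq_top hsimple hK hKgen
    (U := η.range) (by rwa [MonoidHom.coe_range])
    ((map_eq_bot_iff_of_injective A hηinj).not.mpr hAne)
  obtain ⟨W, hW⟩ := exists_openNormalSubgroup_le (E.inf V)
  have hnormal : ((A ⊓ W).map η).Normal := normal_map_of_le_conjAct_smul hAR hE fun c hc =>
    (map_mono (inf_le_inf_left A (hW.trans (OpenSubgroup.toSubgroup_le.mpr (E.inf_le hc))))).trans
      (hV c)
  have hclosed : IsClosed (((A ⊓ W).map η : Subgroup L) : Set L) := by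
    have hAWclosed := (hRclosed.inter (Set.isClosed_centralizer (R : Set G))).inter W.isClosed
    rw [coe_map]
    exact (hAWclosed.isCompact.image hη).isClosed
  rcases hsimple _ hnormal hclosed with h | h
  · exact hAne (eq_bot_of_inf_eq_bot_of_isOpen hVZ W.isOpen
      ((map_eq_bot_iff_of_injective _ hηinj).mp h))
  · have hAW : A ⊓ W = ⊤ := by rw [← comap_map_eq_self_of_injective hηinj (A ⊓ W), h, comap_top]
    have hbot : A ⊓ W = ⊥ := eq_bot_of_isOpen_of_le_centralizer hVZ
      (by rw [hAW, coe_top]; exact isOpen_univ)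
      (inf_le_left.trans (hA.trans (centralizer_le inf_le_left)))
    exact hRne (eq_bot_mono le_top (hAW.symm.trans hbot))

/-- Corollary 4.8: A profinite group with trivial virtual center whose Fitting subgroup is
nilpotent and nontrivial has no compactly generated, topologically simple envelope. -/
theorem stmt_10 {G : Type*} [Group G] [TopologicalSpace G] [IsTopologicalGroup G]
    [CompactSpace G] [T2Space G] [TotallyDisconnectedSpace G]
    (hVZ : ∀ g : G, IsOpen ((Subgroup.centralizer {g} : Subgroup G) : Set G) → g = 1)
    (R : Subgroup G) (hRne : R ≠ ⊥) (hRnormal : R.Normal)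
    (hRclosed : IsClosed (R : Set G)) (hRnilp : Group.IsNilpotent R)
    (hRmax : ∀ S : Subgroup G, S.Normal → Group.IsNilpotent S → S ≤ R) :
    ∀ (L : Type*) [Group L] [TopologicalSpace L] [IsTopologicalGroup L] [T2Space L]
      (η : G →* L), Continuous η → Function.Injective η → IsOpen (Set.range η) →
        Nontrivial L →
        (∀ M : Subgroup L, M.Normal → IsClosed (M : Set L) → M = ⊥ ∨ M = ⊤) →
        ¬ ∃ K : Set L, IsCompact K ∧ Subgroup.closure K = ⊤ :=
  stmt_10_general hVZ R hRne hRnormal hRclosed hRnilp hRmax
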